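/- arXiv:1810.12412 — 2 statements merged into one kernel-verified Lean document; each statement's English description precedes it below -/
import Mathlib

section
/- For $\lambda > 0$ and a rectangular parallelotope $\mathsf{P} = [0,s_1]\times\cdots\times[0,s_n]$, the generating-function identity holds: $\int_{\mathbb{R}^n} e^{-\lambda^2 \pi\, \mathrm{dist}^2(x,\mathsf{P})}\, dx = \lambda^{-n} \prod_{i=1}^n (1 + \lambda s_i)$. -/
/-!
The nearest point of a box `∏ [aᵢ, bᵢ]` to `x` is obtained by clamping each coordinate, so
`dist²(x, P) = ∑ dist²(xᵢ, [aᵢ, bᵢ])`. Hence the Gaussian of the distance factors over the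
coordinates, and by Fubini the integral is a product of one-dimensional integrals. In dimension
one the integrand is `1` on `[a, b]` and a half-Gaussian on either side, which gives
`(b - a) + √(π / c)`; for `c = λ²π` each factor is `s + λ⁻¹ = λ⁻¹ (1 + λ s)`.
-/

open MeasureTheory Set Real Metric

theorem Metric.infDist_eq_dist_of_forall_dist_le {α : Type*} [PseudoMetricSpace α] {x y : α}
    {s : Set α} (hy : y ∈ s) (h : ∀ z ∈ s, dist x y ≤ dist x z) : infDist x s = dist x y :=
  (infDist_le_dist_of_mem hy).antisymm ((le_infDist ⟨y, hy⟩).2 h)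

namespace Real

variable {a b : ℝ}

theorem dist_projIcc_le (h : a ≤ b) (t : ℝ) {y : ℝ} (hy : y ∈ Icc a b) :
    dist t (projIcc a b h t) ≤ dist t y := by
  obtain ⟨hay, hyb⟩ := hy
  rcases le_total t a with hta | hat
  · rw [projIcc_of_le_left h hta, dist_eq, dist_eq, abs_of_nonpos (sub_nonpos.2 hta),
      abs_of_nonpos (sub_nonpos.2 (hta.trans hay))]
    linarith
  rcases le_total t b with htb | hbt
  · rw [projIcc_of_mem h ⟨hat, htb⟩, dist_self]
    exact dist_nonneg
  · rw [projIcc_of_right_le h hbt, dist_eq, dist_eq, abs_of_nonneg (sub_nonneg.2 hbt),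
      abs_of_nonneg (sub_nonneg.2 (hyb.trans hbt))]
    linarith

theorem infDist_Icc (h : a ≤ b) (t : ℝ) : infDist t (Icc a b) = dist t (projIcc a b h t) :=
  infDist_eq_dist_of_forall_dist_le (projIcc a b h t).2 fun _ ↦ dist_projIcc_le h t

end Real

theorem EuclideanSpace.infDist_preimage_pi_Icc_sq {ι : Type*} [Fintype ι] {a b : ι → ℝ}
    (h : ∀ i, a i ≤ b i) (x : EuclideanSpace ℝ ι) :
    infDist x (WithLp.ofLp ⁻¹' pi univ fun i ↦ Icc (a i) (b i)) ^ 2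
      = ∑ i, infDist (x i) (Icc (a i) (b i)) ^ 2 := by
  set P : Set (EuclideanSpace ℝ ι) := WithLp.ofLp ⁻¹' pi univ fun i ↦ Icc (a i) (b i)
  set p : EuclideanSpace ℝ ι := WithLp.toLp 2 fun i ↦ projIcc (a i) (b i) (h i) (x i)
  have hp : p ∈ P := fun i _ ↦ (projIcc (a i) (b i) (h i) (x i)).2
  have hmin : ∀ y ∈ P, dist x p ≤ dist x y := by
    intro y hy
    rw [EuclideanSpace.dist_eq, EuclideanSpace.dist_eq]
    gcongr with i
    exact Real.dist_projIcc_le (h i) (x i) (hy i (mem_univ i))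
  rw [infDist_eq_dist_of_forall_dist_le hp hmin, EuclideanSpace.dist_eq,
    sq_sqrt (by positivity)]
  simp only [Real.infDist_Icc (h _)]
  rfl

theorem EuclideanSpace.integral_prod_eq_prod {𝕜 : Type*} [RCLike 𝕜] {ι : Type*} [Fintype ι]
    (f : ι → ℝ → 𝕜) : ∫ x : EuclideanSpace ℝ ι, ∏ i, f i (x i) = ∏ i, ∫ t, f i t := by
  rw [← (PiLp.volume_preserving_toLp ι).integral_comp
    (MeasurableEquiv.toLp 2 _).measurableEmbedding]
  exact integral_fintype_prod_volume_eq_prod f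

theorem integral_Ioi_exp_neg_mul_sub_sq (c b : ℝ) :
    ∫ t in Ioi b, exp (-c * (t - b) ^ 2) = √(π / c) / 2 := by
  have hpre : (· + b) ⁻¹' Ioi b = Ioi 0 := by ext; simp
  rw [← (measurePreserving_add_right volume b).setIntegral_preimage_emb
    (measurableEmbedding_addRight b), hpre]
  simpa using integral_gaussian_Ioi c

theorem integral_Iic_exp_neg_mul_sub_sq (c a : ℝ) :
    ∫ t in Iic a, exp (-c * (t - a) ^ 2) = √(π / c) / 2 := by
  have := integral_comp_neg_Iic a fun t ↦ exp (-c * (t - -a) ^ 2)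
  simp only [← neg_add', neg_sq] at this
  simpa [sub_eq_add_neg, add_comm] using this.trans (integral_Ioi_exp_neg_mul_sub_sq c (-a))

theorem integral_exp_neg_mul_infDist_Icc_sq {c a b : ℝ} (hc : 0 < c) (hab : a ≤ b) :
    ∫ t, exp (-c * infDist t (Icc a b) ^ 2) = b - a + √(π / c) := by
  set f : ℝ → ℝ := fun t ↦ exp (-c * infDist t (Icc a b) ^ 2)
  have hleft : EqOn f (fun t ↦ exp (-c * (t - a) ^ 2)) (Iic a) := fun t ht ↦ by
    simp only [f, Real.infDist_Icc hab, projIcc_of_le_left hab ht, dist_eq, sq_abs]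
  have hmid : EqOn f 1 (Ioc a b) := fun t ht ↦ by
    simp [f, infDist_zero_of_mem (Ioc_subset_Icc_self ht)]
  have hright : EqOn f (fun t ↦ exp (-c * (t - b) ^ 2)) (Ioi b) := fun t ht ↦ by
    simp only [f, Real.infDist_Icc hab, projIcc_of_right_le hab (le_of_lt ht), dist_eq, sq_abs]
  have hgauss := integrable_exp_neg_mul_sq hc
  have hint_left : IntegrableOn f (Iic a) :=
    (hgauss.comp_sub_right a).integrableOn.congr_fun hleft.symm measurableSet_Iic
  have hint_mid : IntegrableOn f (Ioc a b) :=
    (integrableOn_const measure_Ioc_lt_top.ne).congr_fun hmid.symm measurableSet_Ioc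
  have hint_right : IntegrableOn f (Ioi b) :=
    (hgauss.comp_sub_right b).integrableOn.congr_fun hright.symm measurableSet_Ioi
  have hint_Iic : IntegrableOn f (Iic b) := Iic_union_Ioc_eq_Iic hab ▸ hint_left.union hint_mid
  rw [← intervalIntegral.integral_Iic_add_Ioi hint_Iic hint_right, ← Iic_union_Ioc_eq_Iic hab,
    setIntegral_union (Iic_disjoint_Ioc le_rfl) measurableSet_Ioc hint_left hint_mid,
    setIntegral_congr_fun measurableSet_Iic hleft, setIntegral_congr_fun measurableSet_Ioc hmid,
    setIntegral_congr_fun measurableSet_Ioi hright, integral_Iic_exp_neg_mul_sub_sq,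
    integral_Ioi_exp_neg_mul_sub_sq]
  simp only [Pi.one_apply, setIntegral_const, Real.volume_real_Ioc_of_le hab, smul_eq_mul,
    mul_one]
  ring

/-- Generating-function identity for a rectangular parallelotope:
`∫ e^{-λ²π dist²(x,P)} dx = λ^{-n} ∏ (1 + λ sᵢ)`. -/
theorem gf_dist_integral_parallelotope (n : ℕ) (lam : ℝ) (hlam : 0 < lam)
    (s : Fin n → ℝ) (hs : ∀ i, 0 ≤ s i) :
    ∫ x : EuclideanSpace ℝ (Fin n),
        Real.exp (-(lam ^ 2) * Real.pi *
          Metric.infDist x (WithLp.ofLp ⁻¹' (Set.pi Set.univ fun i => Set.Icc 0 (s i))) ^ 2)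
      = lam ^ (-(n : ℤ)) * ∏ i, (1 + lam * s i) := by
  have hc : 0 < lam ^ 2 * π := by positivity
  have hsqrt : √(π / (lam ^ 2 * π)) = lam⁻¹ := by
    rw [div_mul_cancel_right₀ pi_ne_zero, sqrt_inv, sqrt_sq hlam.le]
  have hfactor (x : EuclideanSpace ℝ (Fin n)) :
      exp (-(lam ^ 2) * π * infDist x (WithLp.ofLp ⁻¹' pi univ fun i ↦ Icc 0 (s i)) ^ 2)
        = ∏ i, exp (-(lam ^ 2 * π) * infDist (x i) (Icc 0 (s i)) ^ 2) := by
    rw [EuclideanSpace.infDist_preimage_pi_Icc_sq hs, ← exp_sum, Finset.mul_sum]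
    ring_nf
  rw [integral_congr_ae (ae_of_all _ hfactor), EuclideanSpace.integral_prod_eq_prod
    fun i t ↦ exp (-(lam ^ 2 * π) * infDist t (Icc 0 (s i)) ^ 2)]
  simp_rw [integral_exp_neg_mul_infDist_Icc_sq hc (hs _), hsqrt]
  rw [zpow_neg, zpow_natCast, ← inv_pow, ← Fin.prod_const, ← Finset.prod_mul_distrib]
  refine Finset.prod_congr rfl fun i _ ↦ ?_
  field_simp
  ring
end

section
/- Let $Z$ be a random variable taking values in $\{0, 1, \dots, n\}$ whose distribution is $\mathbb{P}(Z = j) = \binom{n}{j} p^j (1-p)^{n-j}$ (binomial with parameters $n$ and $p \in [0,1]$). Then the entropy $\mathrm{Ent}[Z] = -\sum_j \mathbb{P}(Z=j)\log\mathbb{P}(Z=j)$ is maximized over $p \in [0,1]$ at $p = 1/2$, i.e., $\mathrm{Ent}[\mathrm{Bin}(p,n)] \leq \mathrm{Ent}[\mathrm{Bin}(1/2,n)]$ for all $p \in [0,1]$. -/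
/-!
For `0 < p < 1` the entropy of `S ∼ Bin(n+1, p)` is `(n+1) h(p) - E[log C(n+1, S)]`, with `h` the
binary entropy. By the Bernstein derivative formula and `C(n+1, k+1) / C(n+1, k) = (n-k+1)/(k+1)`,
its derivative is `(n+1) (ψ(1-p) - ψ(p))`, where `ψ(t) = log t - E[log (T+1)]` for `T ∼ Bin(n, t)`.
Since `(k+1) log ((k+2)/(k+1)) ≤ 1`, one gets `t ψ'(t) ≥ P(T = 0) ≥ 0`, so `ψ` is increasing.
Hence the entropy increases on `[0, 1/2]`, and the symmetry `p ↦ 1 - p` does the rest.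
-/

open Finset Real Polynomial Topology
open scoped fwdDiff

/-- `bernsteinMean n g x` is the expectation of `g S` for `S ∼ Bin(n, x)`. -/
noncomputable def bernsteinMean (n : ℕ) (g : ℕ → ℝ) (x : ℝ) : ℝ :=
  ∑ k ∈ range (n + 1), g k * (bernsteinPolynomial ℝ n k).eval x

theorem bernsteinPolynomial_eval (n k : ℕ) (x : ℝ) :
    (bernsteinPolynomial ℝ n k).eval x = n.choose k * x ^ k * (1 - x) ^ (n - k) := by
  simp [bernsteinPolynomial]

theorem bernsteinPolynomial_eval_nonneg (n k : ℕ) {x : ℝ} (hx0 : 0 ≤ x) (hx1 : x ≤ 1) :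
    0 ≤ (bernsteinPolynomial ℝ n k).eval x := by
  have : 0 ≤ 1 - x := sub_nonneg.2 hx1
  rw [bernsteinPolynomial_eval]
  positivity

theorem bernsteinPolynomial_eval_one_sub (n k : ℕ) (hk : k ≤ n) (x : ℝ) :
    (bernsteinPolynomial ℝ n k).eval (1 - x) = (bernsteinPolynomial ℝ n (n - k)).eval x := by
  rw [← bernsteinPolynomial.flip ℝ n k hk, eval_comp]
  simp

theorem mul_succ_mul_bernsteinPolynomial_eval (n k : ℕ) (x : ℝ) :
    x * ((n + 1) * (bernsteinPolynomial ℝ n k).eval x) =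
      (k + 1) * (bernsteinPolynomial ℝ (n + 1) (k + 1)).eval x := by
  have h : ((n : ℝ) + 1) * n.choose k = (n + 1).choose (k + 1) * (k + 1) := by
    exact_mod_cast Nat.add_one_mul_choose_eq n k
  simp only [bernsteinPolynomial_eval, Nat.add_sub_add_right]
  linear_combination x ^ (k + 1) * (1 - x) ^ (n - k) * h

theorem sum_bernsteinPolynomial_eval (n : ℕ) (x : ℝ) :
    ∑ k ∈ range (n + 1), (bernsteinPolynomial ℝ n k).eval x = 1 := by
  simpa [eval_finsetSum] using congrArg (eval x) (bernsteinPolynomial.sum ℝ n)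

theorem sum_bernsteinPolynomial_eval_one_sub (f : ℕ → ℝ → ℝ) (n : ℕ) (x : ℝ) :
    ∑ k ∈ range (n + 1), f k ((bernsteinPolynomial ℝ n k).eval (1 - x)) =
      ∑ k ∈ range (n + 1), f (n - k) ((bernsteinPolynomial ℝ n k).eval x) := by
  rw [← sum_range_reflect]
  refine sum_congr rfl fun k hk => ?_
  have hk : k ≤ n := Nat.lt_succ_iff.1 (mem_range.1 hk)
  rw [Nat.add_sub_cancel, bernsteinPolynomial_eval_one_sub n _ (Nat.sub_le n k),
    Nat.sub_sub_self hk]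

theorem bernsteinMean_one_sub (n : ℕ) (g : ℕ → ℝ) (x : ℝ) :
    bernsteinMean n g (1 - x) = bernsteinMean n (fun k => g (n - k)) x :=
  sum_bernsteinPolynomial_eval_one_sub (fun k b => g k * b) n x

theorem bernsteinMean_natCast (n : ℕ) (x : ℝ) : bernsteinMean n (fun k => k) x = n * x := by
  simpa [bernsteinMean, eval_finsetSum, nsmul_eq_mul] using
    congrArg (eval x) (bernsteinPolynomial.sum_smul ℝ n)

theorem bernsteinMean_natCast_sub (n : ℕ) (x : ℝ) :
    bernsteinMean n (fun k => ((n - k : ℕ) : ℝ)) x = n * (1 - x) := by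
  rw [← bernsteinMean_natCast, bernsteinMean_one_sub]

theorem hasDerivAt_bernsteinMean (n : ℕ) (g : ℕ → ℝ) (x : ℝ) :
    HasDerivAt (bernsteinMean n g) (n * bernsteinMean (n - 1) (Δ_[1] g) x) x := by
  have hsum := HasDerivAt.fun_sum (u := range (n + 1)) fun k _ =>
    ((bernsteinPolynomial ℝ n k).hasDerivAt x).const_mul (g k)
  refine (hsum : HasDerivAt (bernsteinMean n g) _ x).congr_deriv ?_
  cases n with
  | zero => simp [bernsteinPolynomial]
  | succ m =>
    have hshift : ∑ k ∈ range (m + 1), g (k + 1) * (bernsteinPolynomial ℝ m (k + 1)).eval x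
        + g 0 * (bernsteinPolynomial ℝ m 0).eval x = bernsteinMean m g x := by
      rw [← sum_range_succ' (fun k => g k * (bernsteinPolynomial ℝ m k).eval x), sum_range_succ,
        bernsteinPolynomial.eq_zero_of_lt ℝ (Nat.lt_succ_self m), eval_zero, mul_zero, add_zero,
        bernsteinMean]
    have hdiff : bernsteinMean m (Δ_[1] g) x =
        ∑ k ∈ range (m + 1), g (k + 1) * (bernsteinPolynomial ℝ m k).eval x
          - bernsteinMean m g x := by
      simp only [bernsteinMean, fwdDiff, sub_mul, sum_sub_distrib]
    rw [Nat.add_sub_cancel, hdiff, ← hshift, sum_range_succ']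
    simp only [bernsteinPolynomial.derivative_succ_aux, bernsteinPolynomial.derivative_zero,
      Nat.add_sub_cancel, eval_mul, eval_sub, eval_neg, eval_add, eval_one, eval_natCast,
      mul_sub, sum_sub_distrib, mul_left_comm (g _), ← mul_sum]
    push_cast
    ring

theorem mul_mul_bernsteinMean_fwdDiff_le {g : ℕ → ℝ} (hg : ∀ k : ℕ, (k + 1) * Δ_[1] g k ≤ 1)
    (n : ℕ) {x : ℝ} (hx0 : 0 ≤ x) (hx1 : x ≤ 1) :
    x * (n * bernsteinMean (n - 1) (Δ_[1] g) x) ≤ 1 := by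
  cases n with
  | zero => simp
  | succ m =>
    have hmass : ∑ k ∈ range (m + 1), (bernsteinPolynomial ℝ (m + 1) (k + 1)).eval x ≤ 1 := by
      have := sum_bernsteinPolynomial_eval (m + 1) x
      rw [sum_range_succ'] at this
      linarith [bernsteinPolynomial_eval_nonneg (m + 1) 0 hx0 hx1]
    calc x * ((m + 1 : ℕ) * bernsteinMean (m + 1 - 1) (Δ_[1] g) x)
        = ∑ k ∈ range (m + 1),
            (k + 1) * Δ_[1] g k * (bernsteinPolynomial ℝ (m + 1) (k + 1)).eval x := by
          rw [Nat.add_sub_cancel, bernsteinMean, mul_sum, mul_sum]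
          refine sum_congr rfl fun k _ => ?_
          push_cast
          linear_combination Δ_[1] g k * mul_succ_mul_bernsteinPolynomial_eval m k x
      _ ≤ ∑ k ∈ range (m + 1), (bernsteinPolynomial ℝ (m + 1) (k + 1)).eval x :=
          sum_le_sum fun k _ =>
            mul_le_of_le_one_left (bernsteinPolynomial_eval_nonneg _ _ hx0 hx1) (hg k)
      _ ≤ 1 := hmass

theorem mul_log_add_one_sub_log_le {y : ℝ} (hy : 0 < y) : y * (log (y + 1) - log y) ≤ 1 := by
  have h := log_le_sub_one_of_pos (div_pos (by linarith : 0 < y + 1) hy)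
  rw [log_div (by linarith) hy.ne'] at h
  calc y * (log (y + 1) - log y) ≤ y * ((y + 1) / y - 1) := by gcongr
    _ = 1 := by field_simp; ring

theorem monotoneOn_log_sub_bernsteinMean_log_succ (n : ℕ) :
    MonotoneOn (fun t => log t - bernsteinMean n (fun k => log (k + 1)) t) (Set.Ioo 0 1) := by
  have hderiv : ∀ x ∈ Set.Ioo (0 : ℝ) 1,
      HasDerivAt (fun t => log t - bernsteinMean n (fun k => log (k + 1)) t)
        (x⁻¹ - n * bernsteinMean (n - 1) (Δ_[1] fun k => log (k + 1)) x) x :=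
    fun x hx => (hasDerivAt_log hx.1.ne').sub (hasDerivAt_bernsteinMean n _ x)
  refine monotoneOn_of_hasDerivWithinAt_nonneg (convex_Ioo 0 1)
    (fun x hx => (hderiv x hx).continuousAt.continuousWithinAt)
    (fun x hx => (hderiv x (interior_subset hx)).hasDerivWithinAt) fun x hx => ?_
  rw [interior_Ioo] at hx
  have hg : ∀ k : ℕ, ((k : ℝ) + 1) * Δ_[1] (fun k : ℕ => log ((k : ℝ) + 1)) k ≤ 1 := fun k => by
    simpa [fwdDiff] using mul_log_add_one_sub_log_le (Nat.cast_add_one_pos k)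
  rw [sub_nonneg]
  simpa using (le_inv_mul_iff₀ hx.1).2 (mul_mul_bernsteinMean_fwdDiff_le hg n hx.1.le hx.2.le)

theorem log_choose_succ_sub_log_choose {n k : ℕ} (hk : k ≤ n) :
    log ((n + 1).choose (k + 1)) - log ((n + 1).choose k) =
      log ((n - k : ℕ) + 1) - log (k + 1) := by
  have h : ((n + 1).choose (k + 1) : ℝ) * (k + 1) = (n + 1).choose k * ((n - k : ℕ) + 1) := by
    have h := Nat.choose_succ_right_eq (n + 1) k
    rw [Nat.sub_add_comm hk] at h
    exact_mod_cast h
  have hpos : ∀ j ≤ n + 1, ((n + 1).choose j : ℝ) ≠ 0 := fun j hj => by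
    exact_mod_cast (Nat.choose_pos hj).ne'
  have hlog := congrArg log h
  rw [log_mul (hpos _ (by omega)) (by positivity),
    log_mul (hpos _ (by omega)) (by positivity)] at hlog
  linarith

theorem bernsteinMean_fwdDiff_log_choose_succ (n : ℕ) (x : ℝ) :
    bernsteinMean n (Δ_[1] fun k => log ((n + 1).choose k)) x =
      bernsteinMean n (fun k => log (k + 1)) (1 - x) - bernsteinMean n (fun k => log (k + 1)) x := by
  rw [bernsteinMean_one_sub, bernsteinMean, bernsteinMean, bernsteinMean, ← sum_sub_distrib]
  refine sum_congr rfl fun k hk => ?_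
  rw [← sub_mul, fwdDiff, log_choose_succ_sub_log_choose (Nat.lt_succ_iff.1 (mem_range.1 hk))]

noncomputable def binomialEntropy (n : ℕ) (p : ℝ) : ℝ :=
  ∑ j ∈ range (n + 1), negMulLog ((bernsteinPolynomial ℝ n j).eval p)

theorem neg_sum_mul_log_eq_binomialEntropy (n : ℕ) (p : ℝ) :
    -(∑ j ∈ range (n + 1), ((n.choose j : ℝ) * p ^ j * (1 - p) ^ (n - j)) *
      log ((n.choose j : ℝ) * p ^ j * (1 - p) ^ (n - j))) = binomialEntropy n p := by
  simp [binomialEntropy, negMulLog, bernsteinPolynomial_eval, ← sum_neg_distrib]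

theorem binomialEntropy_one_sub (n : ℕ) (p : ℝ) :
    binomialEntropy n (1 - p) = binomialEntropy n p :=
  sum_bernsteinPolynomial_eval_one_sub (fun _ b => negMulLog b) n p

theorem continuous_binomialEntropy (n : ℕ) : Continuous (binomialEntropy n) := by
  unfold binomialEntropy
  fun_prop

theorem binomialEntropy_eq (n : ℕ) {p : ℝ} (hp : p ∈ Set.Ioo 0 1) :
    binomialEntropy n p = n * binEntropy p - bernsteinMean n (fun j => log (n.choose j)) p := by
  have hterm : ∀ j ∈ range (n + 1), negMulLog ((bernsteinPolynomial ℝ n j).eval p) =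
      -(log (n.choose j) * (bernsteinPolynomial ℝ n j).eval p
        + j * (bernsteinPolynomial ℝ n j).eval p * log p
        + ((n - j : ℕ) : ℝ) * (bernsteinPolynomial ℝ n j).eval p * log (1 - p)) := by
    intro j hj
    have hchoose : (n.choose j : ℝ) ≠ 0 := by
      exact_mod_cast (Nat.choose_pos (Nat.lt_succ_iff.1 (mem_range.1 hj))).ne'
    have hpow : p ^ j ≠ 0 := pow_ne_zero _ hp.1.ne'
    rw [negMulLog, bernsteinPolynomial_eval, log_mul (mul_ne_zero hchoose hpow)
      (pow_ne_zero _ (sub_pos.2 hp.2).ne'), log_mul hchoose hpow, log_pow, log_pow]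
    ring
  have hmean : ∑ j ∈ range (n + 1), (j : ℝ) * (bernsteinPolynomial ℝ n j).eval p = n * p :=
    bernsteinMean_natCast n p
  have hmean' : ∑ j ∈ range (n + 1), ((n - j : ℕ) : ℝ) * (bernsteinPolynomial ℝ n j).eval p =
      n * (1 - p) :=
    bernsteinMean_natCast_sub n p
  rw [binomialEntropy, sum_congr rfl hterm, sum_neg_distrib, sum_add_distrib, sum_add_distrib,
    ← sum_mul, ← sum_mul, hmean, hmean', binEntropy, log_inv, log_inv, bernsteinMean]
  ring

theorem hasDerivAt_binomialEntropy (n : ℕ) {p : ℝ} (hp : p ∈ Set.Ioo 0 1) :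
    HasDerivAt (binomialEntropy n) (n * (log (1 - p) - log p -
      bernsteinMean (n - 1) (Δ_[1] fun k => log (n.choose k)) p)) p := by
  have heq : (fun x => n * binEntropy x - bernsteinMean n (fun j => log (n.choose j)) x)
      =ᶠ[𝓝 p] binomialEntropy n :=
    Filter.eventually_of_mem (isOpen_Ioo.mem_nhds hp) fun x hx => (binomialEntropy_eq n hx).symm
  have hderiv := ((hasDerivAt_binEntropy hp.1.ne' (sub_pos.1 (sub_pos.2 hp.2)).ne).const_mul
    (n : ℝ)).sub (hasDerivAt_bernsteinMean n (fun j => log (n.choose j)) p)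
  exact (hderiv.congr_of_eventuallyEq heq.symm).congr_deriv (by ring)

theorem monotoneOn_binomialEntropy (n : ℕ) :
    MonotoneOn (binomialEntropy n) (Set.Icc 0 (1 / 2)) := by
  have hmem : ∀ x ∈ interior (Set.Icc (0 : ℝ) (1 / 2)), x ∈ Set.Ioo 0 1 ∧ 1 - x ∈ Set.Ioo 0 1 ∧
      x ≤ 1 - x := fun x hx => by
    rw [interior_Icc] at hx
    exact ⟨⟨hx.1, by linarith [hx.2]⟩, ⟨by linarith [hx.2], by linarith [hx.1]⟩,
      by linarith [hx.2]⟩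
  refine monotoneOn_of_hasDerivWithinAt_nonneg (convex_Icc 0 (1 / 2))
    (continuous_binomialEntropy n).continuousOn
    (fun x hx => (hasDerivAt_binomialEntropy n (hmem x hx).1).hasDerivWithinAt) fun x hx => ?_
  obtain ⟨hx, hx', hle⟩ := hmem x hx
  cases n with
  | zero => simp
  | succ m =>
    have hψ := monotoneOn_log_sub_bernsteinMean_log_succ m hx hx' hle
    rw [Nat.add_sub_cancel, bernsteinMean_fwdDiff_log_choose_succ]
    exact mul_nonneg (Nat.cast_nonneg _) (by linarith)

/-- Among binomial distributions `Bin(p, n)` with `p ∈ [0,1]`, the entropy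
`-∑ q_j log q_j` is maximized at `p = 1/2`. -/
theorem binomial_entropy_maximized_at_half (n : ℕ) (p : ℝ)
    (hp0 : 0 ≤ p) (hp1 : p ≤ 1) :
    -(∑ j ∈ Finset.range (n + 1),
        ((n.choose j : ℝ) * p ^ j * (1 - p) ^ (n - j)) *
          Real.log ((n.choose j : ℝ) * p ^ j * (1 - p) ^ (n - j)))
      ≤
    -(∑ j ∈ Finset.range (n + 1),
        ((n.choose j : ℝ) * (1 / 2 : ℝ) ^ j * (1 - 1 / 2 : ℝ) ^ (n - j)) *
          Real.log ((n.choose j : ℝ) * (1 / 2 : ℝ) ^ j * (1 - 1 / 2 : ℝ) ^ (n - j))) := by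
  rw [neg_sum_mul_log_eq_binomialEntropy, neg_sum_mul_log_eq_binomialEntropy]
  have hhalf : (1 / 2 : ℝ) ∈ Set.Icc 0 (1 / 2) := ⟨by norm_num, le_rfl⟩
  rcases le_total p (1 / 2) with hp | hp
  · exact monotoneOn_binomialEntropy n ⟨hp0, hp⟩ hhalf hp
  · rw [← binomialEntropy_one_sub]
    exact monotoneOn_binomialEntropy n ⟨by linarith, by linarith⟩ hhalf (by linarith)
end
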